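/- arXiv:2009.11526 — 3 statements merged into one kernel-verified Lean document; each statement's English description precedes it below -/
import Mathlib

section
/- Let (X, 𝓑, μ, f) be a dissipative system of bounded distortion generated by W. If sup { μ(f^{k−1}(W))/μ(f^k(W)), μ(f^{k+1}(W))/μ(f^k(W)) : k ∈ ℤ } is finite, then both f and f⁻¹ satisfy condition (⋆). -/
/-!
Cut a measurable set `B` along the partition `X = ⋃ₖ fᵏ(W)`. A piece `fᵏ(B₀)`, `B₀ ⊆ W`, is
moved by `f^{±1}` to `f^{k±1}(B₀)`, and bounded distortion compares both with `B₀` up to the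
factor `K`, so `μ(f^{k±1}(B₀)) ≤ K² · (μ(f^{k±1}(W)) / μ(fᵏ(W))) · μ(fᵏ(B₀))`. The ratio is
bounded by hypothesis; summing over the pieces gives (⋆) for `f⁻¹` and for `f`.
-/

open MeasureTheory Filter Set Function Topology ENNReal

noncomputable section

namespace GHShadow

/-- The shadowing property for an invertible bounded linear operator. -/
def HasShadowing {E : Type*} [NormedAddCommGroup E] [NormedSpace ℝ E]
    (T : E ≃L[ℝ] E) : Prop :=
  ∀ ε : ℝ, 0 < ε → ∃ δ : ℝ, 0 < δ ∧ ∀ x : ℤ → E,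
    (∀ n : ℤ, ‖T (x n) - x (n + 1)‖ ≤ δ) →
      ∃ y : E, ∀ n : ℤ, ‖(T ^ n) y - x n‖ < ε

/-- `lim ‖Tⁿ‖^{1/n}` exists and is `< 1`. -/
def SpectralRadiusLtOne {E : Type*} [NormedAddCommGroup E] [NormedSpace ℝ E]
    (T : E →L[ℝ] E) : Prop :=
  ∃ r : ℝ, r < 1 ∧ Tendsto (fun n : ℕ => ‖T ^ n‖ ^ (1 / (n : ℝ))) atTop (nhds r)

/-- The restriction of `T` to `M` has spectral radius `< 1`
(equivalently, is a proper contraction in an equivalent norm). -/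
def ContractsOn {E : Type*} [NormedAddCommGroup E] [NormedSpace ℝ E]
    (T : E ≃L[ℝ] E) (M : Submodule ℝ E) : Prop :=
  ∃ C : ℝ, 0 < C ∧ ∃ t : ℝ, 0 < t ∧ t < 1 ∧
    ∀ n : ℕ, ∀ x ∈ M, ‖(T ^ n) x‖ ≤ C * t ^ n * ‖x‖

def GeneralizedHyperbolic {E : Type*} [NormedAddCommGroup E] [NormedSpace ℝ E]
    (T : E ≃L[ℝ] E) : Prop :=
  ∃ M N : Submodule ℝ E, IsClosed (M : Set E) ∧ IsClosed (N : Set E) ∧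
    IsCompl M N ∧ (∀ x ∈ M, T x ∈ M) ∧ (∀ x ∈ N, T.symm x ∈ N) ∧
    ContractsOn T M ∧ ContractsOn T.symm N

variable {X : Type*} [MeasurableSpace X]

/-- image of `B` under the `k`-th iterate of the invertible map `f`. -/
def img (f : Equiv.Perm X) (k : ℤ) (B : Set X) : Set X := ⇑(f ^ k) '' B

/-- `(X, 𝓑, μ, f)` is a dissipative system generated by `W`. -/
structure IsDissipative (μ : Measure X) (f : Equiv.Perm X) (W : Set X) : Prop where
  sigmaFin : SigmaFinite μ
  meas_f : Measurable f
  meas_symm : Measurable f.symm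
  meas_W : MeasurableSet W
  pos : 0 < μ W
  fin : μ W < ⊤
  disj : Pairwise fun k l : ℤ => Disjoint (img f k W) (img f l W)
  cover : (⋃ k : ℤ, img f k W) = univ

/-- `f` is of bounded distortion on `W` with constant `K`. -/
def BoundedDistortion (μ : Measure X) (f : Equiv.Perm X) (W : Set X) (K : ℝ≥0∞) : Prop :=
  ∀ k : ℤ, ∀ B : Set X, MeasurableSet B → B ⊆ W →
    (1 / K) * (μ (img f k W) * μ B) ≤ μ (img f k B) * μ W ∧
      μ (img f k B) * μ W ≤ K * (μ (img f k W) * μ B)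

/-- condition (⋆) for a transformation `g`. -/
def CondStar (μ : Measure X) (g : X → X) : Prop :=
  ∃ c : ℝ≥0∞, 0 < c ∧ c ≠ ⊤ ∧ ∀ B : Set X, MeasurableSet B → μ (g ⁻¹' B) ≤ c * μ B

/-- condition 𝓗𝓒. -/
def CondHC (μ : Measure X) (f : Equiv.Perm X) (W : Set X) : Prop :=
  limsup (fun n : ℕ =>
    ⨆ k : ℤ, (μ (img f k W) / μ (img f (k + (n : ℤ)) W)) ^ (1 / (n : ℝ))) atTop < 1

/-- condition 𝓗𝓓. -/
def CondHD (μ : Measure X) (f : Equiv.Perm X) (W : Set X) : Prop :=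
  1 < liminf (fun n : ℕ =>
    ⨅ k : ℤ, (μ (img f k W) / μ (img f (k + (n : ℤ)) W)) ^ (1 / (n : ℝ))) atTop

/-- condition 𝓖𝓗. -/
def CondGH (μ : Measure X) (f : Equiv.Perm X) (W : Set X) : Prop :=
  limsup (fun n : ℕ =>
      ⨆ m : ℕ, (μ (img f (-(m : ℤ) - (n : ℤ)) W) / μ (img f (-(m : ℤ)) W)) ^ (1 / (n : ℝ)))
      atTop < 1 ∧
  1 < liminf (fun n : ℕ =>
      ⨅ m : ℕ, (μ (img f (m : ℤ) W) / μ (img f ((m : ℤ) + (n : ℤ)) W)) ^ (1 / (n : ℝ))) atTop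

/-- `T` represents the composition operator `φ ↦ φ ∘ f` on `L^p(X,μ)`. -/
def RepsComp (μ : Measure X) (p : ℝ≥0∞) [Fact (1 ≤ p)] (f : X → X)
    (T : Lp ℝ p μ ≃L[ℝ] Lp ℝ p μ) : Prop :=
  ∀ φ : Lp ℝ p μ, ⇑(T φ) =ᵐ[μ] fun x => (φ : X → ℝ) (f x)

theorem img_img {α : Type*} (f : Equiv.Perm α) (j k : ℤ) (B : Set α) :
    img f j (img f k B) = img f (j + k) B := by
  rw [img, img, img, ← Set.image_comp, ← Equiv.Perm.coe_mul, ← zpow_add]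

theorem img_zero {α : Type*} (f : Equiv.Perm α) (B : Set α) : img f 0 B = B := by
  simp [img]

theorem img_eq_preimage {α : Type*} (f : Equiv.Perm α) (k : ℤ) (B : Set α) :
    img f k B = ⇑(f ^ (-k)) ⁻¹' B := by
  rw [img, Equiv.image_eq_preimage_symm, zpow_neg]
  rfl

theorem img_neg_one {α : Type*} (f : Equiv.Perm α) (B : Set α) : img f (-1) B = f ⁻¹' B := by
  rw [img_eq_preimage, neg_neg, zpow_one]

theorem img_one {α : Type*} (f : Equiv.Perm α) (B : Set α) : img f 1 B = f.symm ⁻¹' B := by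
  rw [img_eq_preimage, zpow_neg, zpow_one]
  rfl

theorem measurable_zpow {f : Equiv.Perm X} (hf : Measurable f) (hfs : Measurable f.symm) (k : ℤ) :
    Measurable ⇑(f ^ k) := by
  induction k using Int.induction_on with
  | zero => exact measurable_id
  | succ n ih => rw [zpow_add_one]; exact ih.comp hf
  | pred n ih => rw [zpow_sub_one]; exact ih.comp hfs

theorem measurableSet_img {f : Equiv.Perm X} (hf : Measurable f) (hfs : Measurable f.symm)
    (k : ℤ) {B : Set X} (hB : MeasurableSet B) : MeasurableSet (img f k B) := by
  rw [img_eq_preimage]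
  exact measurable_zpow hf hfs (-k) hB

theorem measure_image_le_of_partition {Y ι : Type*} [MeasurableSpace Y] [Countable ι]
    {μ : Measure X} {ν : Measure Y} {P : ι → Set X} (hPm : ∀ i, MeasurableSet (P i))
    (hPd : Pairwise (Disjoint on P)) (hPu : ⋃ i, P i = univ) (g : X → Y) {c : ℝ≥0∞}
    (hg : ∀ i B, MeasurableSet B → B ⊆ P i → ν (g '' B) ≤ c * μ B)
    {B : Set X} (hB : MeasurableSet B) : ν (g '' B) ≤ c * μ B := by
  have hBP : B = ⋃ i, B ∩ P i := by rw [← Set.inter_iUnion, hPu, Set.inter_univ]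
  calc ν (g '' B) = ν (⋃ i, g '' (B ∩ P i)) := by rw [← Set.image_iUnion, ← hBP]
    _ ≤ ∑' i, ν (g '' (B ∩ P i)) := measure_iUnion_le _
    _ ≤ ∑' i, c * μ (B ∩ P i) :=
        ENNReal.tsum_le_tsum fun i => hg i _ (hB.inter (hPm i)) inter_subset_right
    _ = c * μ B := by
        rw [ENNReal.tsum_mul_left, ← measure_iUnion _ fun i => hB.inter (hPm i), ← hBP]
        exact fun i j hij => (hPd hij).mono inter_subset_right inter_subset_right

theorem BoundedDistortion.measure_img_le {μ : Measure X} {f : Equiv.Perm X} {W : Set X}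
    {K : ℝ≥0∞} (hbd : BoundedDistortion μ f W K) (hK0 : K ≠ 0) (hK : K ≠ ⊤) (hW0 : μ W ≠ 0)
    (hW : μ W ≠ ⊤) {k l : ℤ} {M : ℝ≥0∞} (hkl : μ (img f l W) ≤ M * μ (img f k W))
    {B : Set X} (hB : MeasurableSet B) (hBW : B ⊆ W) :
    μ (img f l B) ≤ K * K * M * μ (img f k B) := by
  have hlower : μ (img f k W) * μ B ≤ K * (μ (img f k B) * μ W) := by
    rw [← ENNReal.inv_mul_le_iff hK0 hK, ← one_div]
    exact (hbd k B hB hBW).1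
  rw [← ENNReal.mul_le_mul_iff_left hW0 hW]
  calc μ (img f l B) * μ W ≤ K * (μ (img f l W) * μ B) := (hbd l B hB hBW).2
    _ ≤ K * (M * μ (img f k W) * μ B) := by gcongr
    _ ≤ K * (M * (K * (μ (img f k B) * μ W))) := by rw [mul_assoc M]; gcongr
    _ = K * K * M * μ (img f k B) * μ W := by ring

theorem IsDissipative.measure_img_le {μ : Measure X} {f : Equiv.Perm X} {W : Set X}
    (hdiss : IsDissipative μ f W) {K : ℝ≥0∞} (hbd : BoundedDistortion μ f W K) (hK0 : K ≠ 0)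
    (hK : K ≠ ⊤) {d : ℤ} {M : ℝ≥0∞} (hd : ∀ k, μ (img f (k + d) W) ≤ M * μ (img f k W))
    {B : Set X} (hB : MeasurableSet B) : μ (img f d B) ≤ K * K * M * μ B := by
  refine measure_image_le_of_partition
    (fun k => measurableSet_img hdiss.meas_f hdiss.meas_symm k hdiss.meas_W) hdiss.disj
    hdiss.cover _ (fun k B hB hBk => ?_) hB
  have hB₀ : img f k (img f (-k) B) = B := by rw [img_img, add_neg_cancel, img_zero]
  have hB₀W : img f (-k) B ⊆ W := by
    have h : img f (-k) B ⊆ img f (-k) (img f k W) := Set.image_mono hBk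
    rwa [img_img, neg_add_cancel, img_zero] at h
  calc μ (img f d B) = μ (img f (k + d) (img f (-k) B)) := by rw [add_comm, ← img_img, hB₀]
    _ ≤ K * K * M * μ (img f k (img f (-k) B)) :=
        hbd.measure_img_le hK0 hK hdiss.pos.ne' hdiss.fin.ne (hd k)
          (measurableSet_img hdiss.meas_f hdiss.meas_symm (-k) hB) hB₀W
    _ = K * K * M * μ B := by rw [hB₀]

/-- Proposition `diststar`, part 2: if the ratios
`μ(f^{k∓1}(W))/μ(f^k(W))` are uniformly bounded, then both `f` and `f⁻¹` satisfy
condition (⋆). -/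
theorem condStar_of_bounded_ratios
    {X : Type*} [MeasurableSpace X] (μ : Measure X) (f : Equiv.Perm X) (W : Set X)
    (hdiss : IsDissipative μ f W)
    (K : ℝ≥0∞) (hK0 : 0 < K) (hKfin : K ≠ ⊤)
    (hbd : BoundedDistortion μ f W K)
    (hsup : ∃ M : ℝ≥0∞, M ≠ ⊤ ∧ ∀ k : ℤ,
      μ (img f (k - 1) W) / μ (img f k W) ≤ M ∧
      μ (img f (k + 1) W) / μ (img f k W) ≤ M) :
    CondStar μ f ∧ CondStar μ f.symm := by
  obtain ⟨M, hM, hratio⟩ := hsup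
  -- `M + 1 ≠ 0` makes `a / b ≤ M + 1 → a ≤ (M + 1) * b` valid even when `b` is `0` or `⊤`.
  have hmul : ∀ d : ℤ, (∀ k, μ (img f (k + d) W) / μ (img f k W) ≤ M) →
      ∀ k, μ (img f (k + d) W) ≤ (M + 1) * μ (img f k W) := fun d hd k =>
    (ENNReal.div_le_iff_le_mul (.inr (add_ne_top.2 ⟨hM, one_ne_top⟩)) (.inr (by simp))).1
      ((hd k).trans le_self_add)
  have hc0 : 0 < K * K * (M + 1) := ENNReal.mul_pos (mul_ne_zero hK0.ne' hK0.ne') (by simp)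
  have hc : K * K * (M + 1) ≠ ⊤ := by finiteness
  refine ⟨⟨_, hc0, hc, fun B hB => ?_⟩, ⟨_, hc0, hc, fun B hB => ?_⟩⟩
  · rw [← img_neg_one]
    refine hdiss.measure_img_le hbd hK0.ne' hKfin (hmul _ fun k => ?_) hB
    simpa only [← sub_eq_add_neg] using (hratio k).1
  · rw [← img_one]
    exact hdiss.measure_img_le hbd hK0.ne' hKfin (hmul _ fun k => (hratio k).2) hB

end GHShadow
end
end

section
/- Let S be an invertible bounded linear operator on a Banach space X and T an invertible bounded linear operator on a Banach space Y, and suppose T is a factor of S via a factor map Π : X → Y that admits a bounded selector. If S has the shadowing property, then T has the shadowing property. -/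
open MeasureTheory Filter Set Function Topology ENNReal

noncomputable section

namespace GHShadow

variable {X : Type*} [MeasurableSpace X]

/-!
Lift a `δ`-pseudo-orbit `x` of `T` to an `Lδ`-pseudo-orbit of `S`: lift `x 0` and each jump
`x (n + 1) - T (x n)` with the selector, and integrate the lifted jumps along `S` forwards and
backwards in time. An `S`-orbit shadowing the lift projects under `Π` to a `T`-orbit shadowing `x`,
at the cost of a factor `‖Π‖`.
-/

theorem exists_int_seq_succ_eq {α : Type*} (f : ℤ → α ≃ α) (a : α) :
    ∃ u : ℤ → α, u 0 = a ∧ ∀ n, u (n + 1) = f n (u n) := by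
  let u : ℤ → α := fun z =>
    z.inductionOn' (motive := fun _ => α) 0 a (fun k _ x => f k x)
      (fun k _ x => (f (k - 1)).symm x)
  refine ⟨u, Int.inductionOn'_self, fun n => ?_⟩
  rcases le_or_gt 0 n with hn | hn
  · exact Int.inductionOn'_add_one hn
  · have hback : u n = (f n).symm (u (n + 1)) := by
      simpa using Int.inductionOn'_sub_one (motive := fun _ => α) (b := 0) (zero := a)
        (succ := fun k _ x => f k x) (pred := fun k _ x => (f (k - 1)).symm x) (z := n + 1)
        (by omega)
    rw [hback, Equiv.apply_symm_apply]

section Factor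

variable {E F : Type*} [NormedAddCommGroup E] [NormedSpace ℝ E]
  [NormedAddCommGroup F] [NormedSpace ℝ F]
  {S : E ≃L[ℝ] E} {T : F ≃L[ℝ] F} {Pi : E →L[ℝ] F}

theorem map_zpow_apply_of_semiconj (hcomm : ∀ x, Pi (S x) = T (Pi x)) (n : ℤ) (x : E) :
    Pi ((S ^ n) x) = (T ^ n) (Pi x) := by
  induction n using Int.induction_on generalizing x with
  | zero => rfl
  | succ k ih =>
    rw [zpow_add_one, zpow_add_one]
    exact (ih (S x)).trans (congrArg _ (hcomm x))
  | pred k ih =>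
    rw [zpow_sub_one, zpow_sub_one]
    refine (ih (S.symm x)).trans (congrArg _ (T.injective ?_))
    rw [← hcomm, S.apply_symm_apply]
    exact (T.apply_symm_apply _).symm

theorem exists_lift_of_pseudoOrbit (hcomm : ∀ x, Pi (S x) = T (Pi x)) {L : ℝ} (hL : 0 ≤ L)
    (hsel : ∀ y : F, ∃ x : E, Pi x = y ∧ ‖x‖ ≤ L * ‖y‖) {δ : ℝ} {x : ℤ → F}
    (hx : ∀ n, ‖T (x n) - x (n + 1)‖ ≤ δ) :
    ∃ u : ℤ → E, (∀ n, Pi (u n) = x n) ∧ ∀ n, ‖S (u n) - u (n + 1)‖ ≤ L * δ := by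
  choose lift hlift hlift_le using hsel
  set e : ℤ → E := fun n => lift (x (n + 1) - T (x n))
  obtain ⟨u, hu0, hu⟩ := exists_int_seq_succ_eq
    (fun n => S.toEquiv.trans (Equiv.addRight (e n))) (lift (x 0))
  have hu : ∀ n, u (n + 1) = S (u n) + e n := hu
  refine ⟨u, fun n => ?_, fun n => ?_⟩
  · induction n using Int.induction_on with
    | zero => rw [hu0, hlift]
    | succ k ih => rw [hu, map_add, hcomm, ih, hlift]; abel
    | pred k ih =>
      have hstep := congrArg Pi (hu (-k - 1))
      rw [sub_add_cancel, map_add, hcomm, ih, hlift, sub_add_cancel] at hstep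
      exact T.injective (by linear_combination (norm := module) -hstep)
  · calc ‖S (u n) - u (n + 1)‖ = ‖lift (x (n + 1) - T (x n))‖ := by
          rw [hu, sub_add_cancel_left, norm_neg]
      _ ≤ L * ‖T (x n) - x (n + 1)‖ := by rw [norm_sub_rev]; exact hlift_le _
      _ ≤ L * δ := by gcongr; exact hx n

end Factor

theorem shadowing_of_factor_general
    {E F : Type*} [NormedAddCommGroup E] [NormedSpace ℝ E]
    [NormedAddCommGroup F] [NormedSpace ℝ F]
    (S : E ≃L[ℝ] E) (T : F ≃L[ℝ] F) (Pi : E →L[ℝ] F)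
    (hcomm : ∀ x : E, Pi (S x) = T (Pi x))
    (hsel : ∃ L : ℝ, 0 < L ∧ ∀ y : F, ∃ x : E, Pi x = y ∧ ‖x‖ ≤ L * ‖y‖)
    (hS : HasShadowing S) :
    HasShadowing T := by
  obtain ⟨L, hL, hsel⟩ := hsel
  intro ε hε
  obtain ⟨δ, hδ, hshadow⟩ := hS (ε / (‖Pi‖ + 1)) (by positivity)
  refine ⟨δ / L, by positivity, fun x hx => ?_⟩
  obtain ⟨u, hPu, hu⟩ := exists_lift_of_pseudoOrbit hcomm hL.le hsel hx
  obtain ⟨y, hy⟩ := hshadow u fun n => (hu n).trans_eq (mul_div_cancel₀ δ hL.ne')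
  refine ⟨Pi y, fun n => ?_⟩
  calc ‖(T ^ n) (Pi y) - x n‖ = ‖Pi ((S ^ n) y - u n)‖ := by
        rw [map_sub, map_zpow_apply_of_semiconj hcomm, hPu]
    _ ≤ ‖Pi‖ * ‖(S ^ n) y - u n‖ := Pi.le_opNorm _
    _ ≤ ‖Pi‖ * (ε / (‖Pi‖ + 1)) := by gcongr; exact (hy n).le
    _ < ε := by
        rw [← mul_div_assoc, div_lt_iff₀ (by positivity)]
        nlinarith [norm_nonneg Pi]

/-- Lemma `shadowfactor`: if `T` is a factor of `S` via a factor map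
`Π` admitting a bounded selector and `S` has the shadowing property, then so does `T`. -/
theorem shadowing_of_factor
    {E F : Type*} [NormedAddCommGroup E] [NormedSpace ℝ E] [CompleteSpace E]
    [NormedAddCommGroup F] [NormedSpace ℝ F] [CompleteSpace F]
    (S : E ≃L[ℝ] E) (T : F ≃L[ℝ] F) (Pi : E →L[ℝ] F)
    (hsurj : Function.Surjective Pi)
    (hcomm : ∀ x : E, Pi (S x) = T (Pi x))
    (hsel : ∃ L : ℝ, 0 < L ∧ ∀ y : F, ∃ x : E, Pi x = y ∧ ‖x‖ ≤ L * ‖y‖)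
    (hS : HasShadowing S) :
    HasShadowing T :=
  shadowing_of_factor_general S T Pi hcomm hsel hS

end GHShadow
end
end

section
/- Let X = ℝ with the Borel σ-algebra, let μ be the probability measure with density h(x) = 1/(π(1 + x²)) with respect to Lebesgue measure (the standard Cauchy distribution), let f(x) = x + 1, and let 1 ≤ p < ∞. Then the composition operator T_f(φ) = φ ∘ f is a well-defined invertible bounded linear operator on L^p(ℝ, μ), and T_f does NOT have the shadowing property. -/
open MeasureTheory Filter Set Function Topology ENNReal

noncomputable section

namespace GHShadow

variable {X : Type*} [MeasurableSpace X]

/-- The standard Cauchy distribution on `ℝ`: density `1/(π(1+x²))` w.r.t. Lebesgue. -/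
def cauchyMeasure : Measure ℝ :=
  (volume : Measure ℝ).withDensity fun x => ENNReal.ofReal (1 / (Real.pi * (1 + x ^ 2)))

/-!
Let `T φ = φ(· + 1)` and `w = 𝟙_[0,1]`. The Cauchy density `h` satisfies
`h(y - c) ≤ (2 + 2c²) h(y)`, so translation by `c` has norm at most `(2 + 2c²)^(1/p)` on `Lᵖ`;
in particular `‖T⁻ⁿ‖` grows only polynomially. On the other hand the orbit of `w` decays:
`‖Tⁿ w‖ = μ[-n, 1 - n]^(1/p) ≤ n^(-2/p)`.

Put `Bₙ = δ ∑_{j<n} ‖T^(j+1) w‖⁻¹` and `xₙ = Bₙ Tⁿ w` (and `xₙ = 0` for `n < 0`); each step of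
this sequence misses the orbit by at most `δ`. A point `y` that `1`-shadows it satisfies
`‖y - Bₙ w‖ ≤ ‖T⁻ⁿ‖`, hence `Bₙ ‖w‖ ≤ ‖y‖ + (2 + 2n²)^(1/p)`; but `B_{2m} ≥ δ m · m^(2/p)`,
which grows faster.
-/

section CompositionOperator

variable {α E : Type*} [MeasurableSpace α] {μ : Measure α} [NormedAddCommGroup E]
  [NormedSpace ℝ E] {p : ℝ≥0∞} [Fact (1 ≤ p)] {g : α → α} {c : ℝ≥0∞}

def compLpOfMapLeSMul (hg : Measurable g) (hc : c ≠ ∞) (h : μ.map g ≤ c • μ) :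
    Lp E p μ →L[ℝ] Lp E p μ :=
  (Lp.compMeasurePreservingₗᵢ ℝ g ⟨hg, rfl⟩).toContinuousLinearMap ∘L
    Lp.LpToLpOfMeasureLeSMul hc h

lemma coeFn_compLpOfMapLeSMul (hg : Measurable g) (hc : c ≠ ∞) (h : μ.map g ≤ c • μ)
    (φ : Lp E p μ) :
    compLpOfMapLeSMul hg hc h φ =ᵐ[μ] φ ∘ g :=
  (Lp.coeFn_compMeasurePreserving _ _).trans
    (ae_eq_comp hg.aemeasurable (Lp.coeFn_LpToLpOfMeasureLeSMul hc h φ))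

lemma norm_compLpOfMapLeSMul_le (hg : Measurable g) (hc : c ≠ ∞) (h : μ.map g ≤ c • μ)
    (φ : Lp E p μ) :
    ‖compLpOfMapLeSMul hg hc h φ‖ ≤ c.toReal ^ (1 / p).toReal * ‖φ‖ := by
  calc ‖compLpOfMapLeSMul hg hc h φ‖ = ‖Lp.LpToLpOfMeasureLeSMul (E := E) hc h φ‖ :=
        Lp.norm_compMeasurePreserving _ _
    _ ≤ c.toReal ^ (1 / p).toReal * ‖φ‖ :=
        (ContinuousLinearMap.le_opNorm _ _).trans <|
          mul_le_mul_of_nonneg_right (Lp.norm_LpToLpOfMeasureLeSMul_le hc h) (norm_nonneg φ)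

lemma quasiMeasurePreserving_of_map_le_smul (hg : Measurable g) (h : μ.map g ≤ c • μ) :
    Measure.QuasiMeasurePreserving g μ μ :=
  ⟨hg, Measure.absolutelyContinuous_of_le_smul h⟩

lemma compLpOfMapLeSMul_indicatorConstLp (hg : Measurable g) (hc : c ≠ ∞)
    (h : μ.map g ≤ c • μ) {s : Set α} (hs : MeasurableSet s) (hμs : μ s ≠ ∞) (e : E) :
    compLpOfMapLeSMul hg hc h (indicatorConstLp p hs hμs e) =
      indicatorConstLp p (hs.preimage hg)
        (by
          rw [← Measure.map_apply hg hs]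
          exact ((h s).trans_lt (ENNReal.mul_lt_top hc.lt_top hμs.lt_top)).ne) e := by
  refine Lp.ext ((coeFn_compLpOfMapLeSMul hg hc h _).trans ?_)
  refine ((quasiMeasurePreserving_of_map_le_smul hg h).ae_eq indicatorConstLp_coeFn).trans ?_
  exact (indicatorConstLp_coeFn (hs := hs.preimage hg)).symm.trans (by rfl)

end CompositionOperator

section Shadowing

variable {E : Type*} [NormedAddCommGroup E] [NormedSpace ℝ E]

-- For `k < 0` we have `k.toNat = 0`, so the sum is empty and the term vanishes.
def growingPseudoOrbit (T : E ≃L[ℝ] E) (w : E) (δ : ℝ) (k : ℤ) : E :=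
  (δ * ∑ j ∈ Finset.range k.toNat, ‖(T ^ (j + 1)) w‖⁻¹) • (T ^ k.toNat) w

lemma norm_apply_growingPseudoOrbit_sub_le {T : E ≃L[ℝ] E} {w : E} (hw : w ≠ 0) {δ : ℝ}
    (hδ : 0 ≤ δ) (k : ℤ) :
    ‖T (growingPseudoOrbit T w δ k) - growingPseudoOrbit T w δ (k + 1)‖ ≤ δ := by
  cases k with
  | ofNat n =>
    have hTn : (T ^ (n + 1)) w ≠ 0 := (T ^ (n + 1)).map_ne_zero_iff.mpr hw
    have hstep : T ((T ^ n) w) = (T ^ (n + 1)) w := by rw [pow_succ']; rfl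
    have hsucc : ((n : ℤ) + 1).toNat = n + 1 := by omega
    simp only [growingPseudoOrbit, Int.ofNat_eq_natCast, Int.toNat_natCast, hsucc, map_smul,
      hstep, Finset.sum_range_succ, ← sub_smul, norm_smul]
    rw [show δ * ∑ j ∈ Finset.range n, ‖(T ^ (j + 1)) w‖⁻¹ -
        δ * (∑ j ∈ Finset.range n, ‖(T ^ (j + 1)) w‖⁻¹ + ‖(T ^ (n + 1)) w‖⁻¹) =
        -(δ * ‖(T ^ (n + 1)) w‖⁻¹) by ring]
    rw [norm_neg, Real.norm_of_nonneg (by positivity), mul_assoc,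
      inv_mul_cancel₀ (norm_ne_zero_iff.mpr hTn), mul_one]
  | negSucc n =>
    have hsucc : (Int.negSucc n + 1).toNat = 0 := by omega
    simp [growingPseudoOrbit, hsucc, hδ]

theorem not_hasShadowing_of_forall_lt_sum_inv_norm {T : E ≃L[ℝ] E} {w : E} (hw : w ≠ 0)
    {K : ℕ → ℝ} (hK : ∀ n v, ‖v‖ ≤ K n * ‖(T ^ n) v‖)
    (hS : ∀ C : ℝ, ∃ n : ℕ,
      C * (1 + K n) < ∑ j ∈ Finset.range n, ‖(T ^ (j + 1)) w‖⁻¹) :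
    ¬ HasShadowing T := by
  intro hT
  obtain ⟨δ, hδ, hshadow⟩ := hT 1 one_pos
  obtain ⟨y, hy⟩ := hshadow _ (norm_apply_growingPseudoOrbit_sub_le hw hδ.le)
  set S : ℕ → ℝ := fun n => ∑ j ∈ Finset.range n, ‖(T ^ (j + 1)) w‖⁻¹
  have hw' : 0 < ‖w‖ := norm_pos_iff.mpr hw
  have hK0 : ∀ n, 0 ≤ K n := fun n => by
    nlinarith [hK n w, norm_nonneg ((T ^ n) w)]
  have key : ∀ n : ℕ, δ * S n * ‖w‖ ≤ ‖y‖ + K n := by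
    intro n
    have hclose : ‖(T ^ n) (y - (δ * S n) • w)‖ < 1 := by
      simpa [growingPseudoOrbit, S, map_sub, map_smul] using hy n
    calc δ * S n * ‖w‖ = ‖(δ * S n) • w‖ := by
          rw [norm_smul, Real.norm_of_nonneg (by positivity)]
      _ ≤ ‖y‖ + ‖y - (δ * S n) • w‖ := by
          rw [norm_sub_rev]; exact norm_le_insert' _ _
      _ ≤ ‖y‖ + K n := by
          gcongr
          exact (hK n _).trans (mul_le_of_le_one_right (hK0 n) hclose.le)
  obtain ⟨n, hn⟩ := hS ((‖y‖ + 1) / (δ * ‖w‖))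
  rw [div_mul_eq_mul_div, div_lt_iff₀ (by positivity)] at hn
  nlinarith [key n, hK0 n, norm_nonneg y]

end Shadowing

lemma exists_mul_one_add_rpow_lt_sum {s : ℝ} (hs : 0 ≤ s) {b : ℕ → ℝ}
    (hb : ∀ j : ℕ, (((j : ℝ) + 1) ^ 2) ^ s ≤ b j) (C : ℝ) :
    ∃ n : ℕ, C * (1 + (2 + 2 * (n : ℝ) ^ 2) ^ s) < ∑ j ∈ Finset.range n, b j := by
  obtain ⟨m, hm⟩ := exists_nat_gt (|C| * (1 + 10 ^ s))
  have hm1 : (1 : ℝ) ≤ m :=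
    Nat.one_le_cast.mpr (Nat.cast_pos.mp (lt_of_le_of_lt (by positivity) hm))
  set q := ((m : ℝ) ^ 2) ^ s with hq
  have hq1 : 1 ≤ q := Real.one_le_rpow (by nlinarith) hs
  -- With `n = 2m`, the last `m` terms of the sum each exceed `q`, while `(2 + 8m²)^s ≤ 10^s q`.
  refine ⟨2 * m, ?_⟩
  have hsum : m * q ≤ ∑ j ∈ Finset.range (2 * m), b j :=
    calc m * q = ∑ _j ∈ Finset.Ico m (2 * m), q := by
          rw [Finset.sum_const, Nat.card_Ico, show 2 * m - m = m by omega, nsmul_eq_mul]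
      _ ≤ ∑ j ∈ Finset.Ico m (2 * m), b j := Finset.sum_le_sum fun j hj => by
          refine (Real.rpow_le_rpow (by positivity) ?_ hs).trans (hb j)
          have : (m : ℝ) ≤ j := by exact_mod_cast (Finset.mem_Ico.mp hj).1
          nlinarith
      _ ≤ ∑ j ∈ Finset.range (2 * m), b j :=
          Finset.sum_le_sum_of_subset_of_nonneg
            (fun j hj => Finset.mem_range.mpr (Finset.mem_Ico.mp hj).2)
            fun j _ _ => (Real.rpow_nonneg (by positivity) s).trans (hb j)
  have hK : (2 + 2 * ((2 * m : ℕ) : ℝ) ^ 2) ^ s ≤ 10 ^ s * q := by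
    rw [hq, ← Real.mul_rpow (by norm_num) (by positivity)]
    exact Real.rpow_le_rpow (by positivity) (by push_cast; nlinarith) hs
  calc C * (1 + (2 + 2 * ((2 * m : ℕ) : ℝ) ^ 2) ^ s)
      ≤ |C| * (1 + 10 ^ s * q) :=
        mul_le_mul (le_abs_self C) (by gcongr) (by positivity) (abs_nonneg C)
      _ ≤ |C| * (1 + 10 ^ s) * q := by
        rw [mul_assoc]; gcongr; nlinarith
      _ < m * q := by gcongr
      _ ≤ _ := hsum

lemma one_add_sq_le_mul_one_add_sub_sq (y c : ℝ) :
    1 + y ^ 2 ≤ (2 + 2 * c ^ 2) * (1 + (y - c) ^ 2) := by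
  nlinarith [sq_nonneg (y - 2 * c), sq_nonneg (c * (y - c))]

lemma map_add_right_withDensity_le {G : Type*} [MeasurableSpace G] [AddGroup G]
    [MeasurableAdd G] {ν : Measure G} [ν.IsAddRightInvariant] {h : G → ℝ≥0∞} {c : G}
    {K : ℝ≥0∞} (hK_ne_top : K ≠ ∞) (hK : ∀ y, h (y - c) ≤ K * h y) :
    (ν.withDensity h).map (· + c) ≤ K • ν.withDensity h := by
  refine Measure.le_iff.2 fun s hs => ?_
  rw [Measure.map_apply (measurable_add_const c) hs,
    withDensity_apply _ (hs.preimage (measurable_add_const c)), Measure.smul_apply,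
    withDensity_apply _ hs, smul_eq_mul, ← lintegral_const_mul' _ _ hK_ne_top]
  calc ∫⁻ x in (· + c) ⁻¹' s, h x ∂ν
      = ∫⁻ x in (· + c) ⁻¹' s, h (x + c - c) ∂ν := by
        simp only [add_sub_cancel_right]
    _ = ∫⁻ y in s, h (y - c) ∂ν :=
        (measurePreserving_add_right ν c).setLIntegral_comp_preimage_emb
          (MeasurableEquiv.addRight c).measurableEmbedding (fun y => h (y - c)) s
    _ ≤ ∫⁻ y in s, K * h y ∂ν := lintegral_mono fun y => hK y

lemma cauchyMeasure_map_add_right_le (c : ℝ) :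
    cauchyMeasure.map (· + c) ≤ ENNReal.ofReal (2 + 2 * c ^ 2) • cauchyMeasure := by
  refine map_add_right_withDensity_le ENNReal.ofReal_ne_top fun y => ?_
  rw [← ENNReal.ofReal_mul (by positivity)]
  refine ENNReal.ofReal_le_ofReal ?_
  rw [mul_one_div, div_le_div_iff₀ (by positivity) (by positivity)]
  nlinarith [one_add_sq_le_mul_one_add_sub_sq y c, Real.pi_pos]

lemma cauchyMeasure_eq_cauchyMeasure_zero_one :
    cauchyMeasure = ProbabilityTheory.cauchyMeasure 0 1 := by
  rw [ProbabilityTheory.cauchyMeasure_of_scale_ne_zero _ one_ne_zero, cauchyMeasure]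
  congr 1
  funext x
  rw [ProbabilityTheory.cauchyPDF_def, ProbabilityTheory.cauchyPDFReal_def]
  congr 1
  push_cast
  field_simp
  ring

instance : IsProbabilityMeasure cauchyMeasure :=
  cauchyMeasure_eq_cauchyMeasure_zero_one ▸ inferInstance

section CauchyTranslation

variable {E : Type*} [NormedAddCommGroup E] [NormedSpace ℝ E] {p : ℝ≥0∞} [Fact (1 ≤ p)]

def cauchyTranslate (c : ℝ) : Lp E p cauchyMeasure →L[ℝ] Lp E p cauchyMeasure :=
  compLpOfMapLeSMul (measurable_add_const c) ENNReal.ofReal_ne_top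
    (cauchyMeasure_map_add_right_le c)

lemma coeFn_cauchyTranslate (c : ℝ) (φ : Lp E p cauchyMeasure) :
    cauchyTranslate c φ =ᵐ[cauchyMeasure] fun x => φ (x + c) :=
  coeFn_compLpOfMapLeSMul _ _ _ φ

lemma norm_cauchyTranslate_le (c : ℝ) (φ : Lp E p cauchyMeasure) :
    ‖cauchyTranslate c φ‖ ≤ (2 + 2 * c ^ 2) ^ (1 / p).toReal * ‖φ‖ := by
  refine (norm_compLpOfMapLeSMul_le _ _ (cauchyMeasure_map_add_right_le c) φ).trans_eq ?_
  rw [ENNReal.toReal_ofReal (by positivity)]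

lemma cauchyTranslate_cauchyTranslate (c d : ℝ) (φ : Lp E p cauchyMeasure) :
    cauchyTranslate c (cauchyTranslate d φ) = cauchyTranslate (c + d) φ := by
  refine Lp.ext ((coeFn_cauchyTranslate c _).trans ?_)
  refine ((quasiMeasurePreserving_of_map_le_smul (measurable_add_const c)
    (cauchyMeasure_map_add_right_le c)).ae_eq (coeFn_cauchyTranslate d φ)).trans ?_
  refine EventuallyEq.trans ?_ (coeFn_cauchyTranslate (c + d) φ).symm
  filter_upwards with x
  simp only [Function.comp_apply, add_assoc]

lemma cauchyTranslate_zero (φ : Lp E p cauchyMeasure) : cauchyTranslate 0 φ = φ :=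
  Lp.ext ((coeFn_cauchyTranslate 0 φ).trans (by simp only [add_zero]; rfl))

def cauchyShift : Lp E p cauchyMeasure ≃L[ℝ] Lp E p cauchyMeasure :=
  .equivOfInverse (cauchyTranslate 1) (cauchyTranslate (-1))
    (fun φ => by rw [cauchyTranslate_cauchyTranslate, neg_add_cancel, cauchyTranslate_zero])
    (fun φ => by rw [cauchyTranslate_cauchyTranslate, add_neg_cancel, cauchyTranslate_zero])

lemma cauchyShift_pow_apply (n : ℕ) (φ : Lp E p cauchyMeasure) :
    (cauchyShift ^ n) φ = cauchyTranslate n φ := by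
  induction n generalizing φ with
  | zero => rw [pow_zero, Nat.cast_zero, cauchyTranslate_zero]; rfl
  | succ n ih =>
    change (cauchyShift ^ n) (cauchyTranslate 1 φ) = _
    rw [ih, cauchyTranslate_cauchyTranslate, Nat.cast_succ]

lemma norm_le_mul_norm_cauchyShift_pow (n : ℕ) (φ : Lp E p cauchyMeasure) :
    ‖φ‖ ≤ (2 + 2 * (n : ℝ) ^ 2) ^ (1 / p).toReal * ‖(cauchyShift ^ n) φ‖ := by
  calc ‖φ‖ = ‖cauchyTranslate (-n) (cauchyTranslate n φ)‖ := by
        rw [cauchyTranslate_cauchyTranslate, neg_add_cancel, cauchyTranslate_zero]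
    _ ≤ _ := norm_cauchyTranslate_le _ _
    _ = _ := by rw [neg_sq, cauchyShift_pow_apply]

end CauchyTranslation

lemma cauchyMeasure_Icc_pos {a b : ℝ} (hab : a < b) : 0 < cauchyMeasure (Icc a b) := by
  rw [pos_iff_ne_zero, cauchyMeasure, Ne, withDensity_apply_eq_zero' (by fun_prop)]
  have hpos : ∀ x : ℝ, ENNReal.ofReal (1 / (Real.pi * (1 + x ^ 2))) ≠ 0 := fun x =>
    (ENNReal.ofReal_pos.mpr (by positivity)).ne'
  simp only [ne_eq, hpos, not_false_eq_true, ofPred_true, univ_inter, Real.volume_Icc]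
  exact (ENNReal.ofReal_pos.mpr (sub_pos.mpr hab)).ne'

lemma cauchyMeasure_Icc_neg_le {x : ℝ} (hx : 1 ≤ x) :
    cauchyMeasure (Icc (-x) (1 - x)) ≤ ENNReal.ofReal (x ^ 2)⁻¹ := by
  have hdensity : ∀ y ∈ Icc (-x) (1 - x),
      ENNReal.ofReal (1 / (Real.pi * (1 + y ^ 2))) ≤ ENNReal.ofReal (x ^ 2)⁻¹ := by
    rintro y ⟨hy₁, hy₂⟩
    refine ENNReal.ofReal_le_ofReal ?_
    rw [one_div, inv_le_inv₀ (by positivity) (by positivity)]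
    have hpi : 0 ≤ Real.pi - 3 := by linarith [Real.pi_gt_three]
    nlinarith [mul_nonneg hpi (sq_nonneg y), mul_nonneg (by linarith : 0 ≤ x - 1 - y)
      (by linarith : 0 ≤ 1 - x - y)]
  calc cauchyMeasure (Icc (-x) (1 - x))
      ≤ ∫⁻ _ in Icc (-x) (1 - x), ENNReal.ofReal (x ^ 2)⁻¹ := by
        rw [cauchyMeasure, withDensity_apply _ measurableSet_Icc]
        exact setLIntegral_mono measurable_const hdensity
    _ = ENNReal.ofReal (x ^ 2)⁻¹ := by
        rw [setLIntegral_const, Real.volume_Icc, show 1 - x - -x = 1 by ring,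
          ENNReal.ofReal_one, mul_one]

section UnitIntervalIndicator

variable (p : ℝ≥0∞) [Fact (1 ≤ p)]

def unitIntervalIndicator : Lp ℝ p cauchyMeasure :=
  indicatorConstLp p measurableSet_Icc (measure_ne_top cauchyMeasure (Icc (0 : ℝ) 1)) 1

variable {p}

lemma norm_cauchyTranslate_unitIntervalIndicator (hp : p ≠ ∞) (x : ℝ) :
    ‖cauchyTranslate x (unitIntervalIndicator p)‖ =
      cauchyMeasure.real (Icc (-x) (1 - x)) ^ (1 / p).toReal := by
  rw [unitIntervalIndicator, cauchyTranslate, compLpOfMapLeSMul_indicatorConstLp,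
    norm_indicatorConstLp (zero_lt_one.trans_le Fact.out).ne' hp, norm_one, one_mul,
    preimage_add_const_Icc, zero_sub, ENNReal.toReal_div, ENNReal.toReal_one]

lemma unitIntervalIndicator_ne_zero : unitIntervalIndicator p ≠ 0 := by
  rw [← norm_ne_zero_iff, unitIntervalIndicator, norm_indicatorConstLp'
    (zero_lt_one.trans_le Fact.out).ne' (cauchyMeasure_Icc_pos one_pos).ne', norm_one, one_mul]
  exact (Real.rpow_pos_of_pos
    (ENNReal.toReal_pos (cauchyMeasure_Icc_pos one_pos).ne' (measure_ne_top _ _)) _).ne'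

lemma rpow_le_inv_norm_cauchyShift_pow_unitIntervalIndicator (hp : p ≠ ∞) {n : ℕ}
    (hn : 1 ≤ n) :
    ((n : ℝ) ^ 2) ^ (1 / p).toReal ≤
      ‖(cauchyShift ^ n) (unitIntervalIndicator p)‖⁻¹ := by
  have hn' : (1 : ℝ) ≤ n := by exact_mod_cast hn
  rw [cauchyShift_pow_apply, norm_cauchyTranslate_unitIntervalIndicator hp,
    ← Real.inv_rpow measureReal_nonneg]
  refine Real.rpow_le_rpow (by positivity) ?_ ENNReal.toReal_nonneg
  rw [measureReal_def, le_inv_comm₀ (by positivity)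
    (ENNReal.toReal_pos (cauchyMeasure_Icc_pos (by linarith)).ne' (measure_ne_top _ _))]
  exact ENNReal.toReal_le_of_le_ofReal (by positivity) (cauchyMeasure_Icc_neg_le hn')

end UnitIntervalIndicator

/-- Example "Non-Shadowing": for the standard Cauchy distribution `μ`
on `ℝ` and `f(x) = x + 1`, the composition operator `T_f φ = φ ∘ f` is a well-defined
invertible bounded linear operator on `L^p(ℝ, μ)` which does NOT have the shadowing
property. -/
theorem cauchy_composition_not_shadowing
    (p : ℝ≥0∞) [Fact (1 ≤ p)] (hp : p ≠ ⊤) :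
    ∃ T : Lp ℝ p cauchyMeasure ≃L[ℝ] Lp ℝ p cauchyMeasure,
      (∀ φ : Lp ℝ p cauchyMeasure,
        ⇑(T φ) =ᵐ[cauchyMeasure] fun x => (φ : ℝ → ℝ) (x + 1)) ∧
      ¬ HasShadowing T := by
  refine ⟨cauchyShift, coeFn_cauchyTranslate 1, ?_⟩
  refine not_hasShadowing_of_forall_lt_sum_inv_norm unitIntervalIndicator_ne_zero
    norm_le_mul_norm_cauchyShift_pow (exists_mul_one_add_rpow_lt_sum ENNReal.toReal_nonneg ?_)
  intro j
  exact_mod_cast rpow_le_inv_norm_cauchyShift_pow_unitIntervalIndicator hp j.succ_pos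

end GHShadow
end
end
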